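/- arXiv:2203.02006 — 3 statements merged into one kernel-verified Lean document; each statement's English description precedes it below -/
import Mathlib

section
/- Let d ≥ 2, r > 0, and let D = {(x_i, y_i)}_{i=1}^n ⊂ ℝ^d × {−1, +1} be a dataset such that the first coordinate of every covariate satisfies (x_i)_1 = y_i·r/2. Let x̃_i ∈ ℝ^{d−1} denote x_i with its first coordinate removed, and suppose the induced dataset D̃ = {(x̃_i, y_i)}_{i=1}^n is linearly separable, with normalized max-ℓ2-margin solution θ̃ ∈ ℝ^{d−1} (‖θ̃‖₂ = 1) and margin γ̃ = min_{i∈[n]} y_i θ̃ᵀ x̃_i > 0. Then the normalized max-ℓ2-margin solution of D is θ̂ = (1/√(r² + 4γ̃²)) · (r, 2γ̃·θ̃), i.e. θ̂ is the unique unit-ℓ2-norm maximizer of min_{i∈[n]} y_i θᵀ x_i. -/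
open MeasureTheory ProbabilityTheory Real Set
open scoped ENNReal BigOperators

noncomputable section

/-- Euclidean dot product on `Fin d → ℝ`. -/
def dot {d : ℕ} (u v : Fin d → ℝ) : ℝ := ∑ j, u j * v j

/-- Euclidean (`ℓ2`) norm on `Fin d → ℝ`. -/
def norm2 {d : ℕ} (u : Fin d → ℝ) : ℝ := Real.sqrt (∑ j, (u j) ^ 2)

/-- The (minimum) margin of the linear classifier `θ` on the dataset `{(x i, y i)}`. -/
def margin {d n : ℕ} (x : Fin n → Fin d → ℝ) (y : Fin n → ℝ) (θ : Fin d → ℝ) : ℝ :=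
  ⨅ i, y i * dot θ (x i)
/-!
Split `θ = (θ₀, τ)`. Since every `x i` has first coordinate `y i · r/2`, the margin of `θ` is
`θ₀ r/2` plus the margin of `τ` on the induced dataset, and by homogeneity the latter is at most
`‖τ‖ γ̃`. Cauchy–Schwarz in the plane then bounds the margin by `‖θ‖ · √(r² + 4γ̃²)/2`, and `θ̂` is
the unit vector attaining this. The margin is a minimum of linear forms, hence superadditive: two
distinct unit maximizers would have a sum of margin `√(r² + 4γ̃²)` and norm `< 2`, contradicting
the bound by strict convexity of the Euclidean ball.
-/

section Norm2

variable {d : ℕ}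

theorem norm2_eq_norm_toLp (u : Fin d → ℝ) :
    norm2 u = ‖(WithLp.toLp 2 u : EuclideanSpace ℝ (Fin d))‖ := by
  simp [norm2, EuclideanSpace.norm_eq]

theorem norm2_nonneg (u : Fin d → ℝ) : 0 ≤ norm2 u := Real.sqrt_nonneg _

theorem norm2_smul (c : ℝ) (u : Fin d → ℝ) : norm2 (c • u) = |c| * norm2 u := by
  simp only [norm2_eq_norm_toLp, WithLp.toLp_smul, norm_smul, Real.norm_eq_abs]

theorem norm2_eq_zero {u : Fin d → ℝ} : norm2 u = 0 ↔ u = 0 := by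
  simp [norm2_eq_norm_toLp]

theorem norm2_add_le (u v : Fin d → ℝ) : norm2 (u + v) ≤ norm2 u + norm2 v := by
  simpa only [norm2_eq_norm_toLp, WithLp.toLp_add] using norm_add_le _ _

theorem eq_of_norm2_eq_one_of_two_le_norm2_add {u v : Fin d → ℝ} (hu : norm2 u = 1)
    (hv : norm2 v = 1) (huv : 2 ≤ norm2 (u + v)) : u = v := by
  have hsum : norm2 (u + v) = norm2 u + norm2 v := by
    linarith [norm2_add_le u v]
  rw [norm2_eq_norm_toLp, norm2_eq_norm_toLp, norm2_eq_norm_toLp, WithLp.toLp_add] at hsum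
  rw [norm2_eq_norm_toLp] at hu hv
  exact WithLp.toLp_injective 2 (eq_of_norm_eq_of_norm_add_eq (hu.trans hv.symm) hsum)

theorem norm2_cons (a : ℝ) (v : Fin d → ℝ) :
    norm2 (Fin.cons a v : Fin (d + 1) → ℝ) = √(a ^ 2 + norm2 v ^ 2) := by
  rw [norm2, norm2, Real.sq_sqrt (by positivity), Fin.sum_univ_succ]
  simp only [Fin.cons_zero, Fin.cons_succ]

end Norm2

theorem mul_add_mul_le_sqrt_mul_sqrt (a b p q : ℝ) :
    a * p + b * q ≤ √(a ^ 2 + b ^ 2) * √(p ^ 2 + q ^ 2) := by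
  simpa [Fin.sum_univ_two] using Real.sum_mul_le_sqrt_mul_sqrt Finset.univ ![a, b] ![p, q]

section Margin

variable {d n : ℕ} {x : Fin n → Fin d → ℝ} {y : Fin n → ℝ}

theorem dot_smul_left (c : ℝ) (u v : Fin d → ℝ) : dot (c • u) v = c * dot u v := by
  simp [dot, Finset.mul_sum, mul_assoc]

theorem dot_add_left (u u' v : Fin d → ℝ) : dot (u + u') v = dot u v + dot u' v := by
  simp [dot, add_mul, Finset.sum_add_distrib]

theorem dot_eq_head_add_dot_tail (u v : Fin (d + 1) → ℝ) :
    dot u v = u 0 * v 0 + dot (Fin.tail u) (Fin.tail v) := by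
  simp [dot, Fin.sum_univ_succ, Fin.tail]

theorem margin_smul {c : ℝ} (hc : 0 ≤ c) (θ : Fin d → ℝ) :
    margin x y (c • θ) = c * margin x y θ := by
  simp only [margin, dot_smul_left, Real.mul_iInf_of_nonneg hc, mul_left_comm]

theorem margin_zero : margin x y 0 = 0 := by
  simpa using margin_smul (x := x) (y := y) le_rfl 0

theorem margin_le_apply (θ : Fin d → ℝ) (i : Fin n) : margin x y θ ≤ y i * dot θ (x i) :=
  ciInf_le (Finite.bddBelow_range _) i

theorem margin_add_le_margin_add [Nonempty (Fin n)] (θ θ' : Fin d → ℝ) :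
    margin x y θ + margin x y θ' ≤ margin x y (θ + θ') :=
  le_ciInf fun i => by
    rw [dot_add_left, mul_add]
    exact add_le_add (margin_le_apply θ i) (margin_le_apply θ' i)

theorem margin_le_norm2_mul_of_forall_norm2_le_one {γ : ℝ}
    (hmax : ∀ θ, norm2 θ ≤ 1 → margin x y θ ≤ γ) (θ : Fin d → ℝ) :
    margin x y θ ≤ norm2 θ * γ := by
  rcases (norm2_nonneg θ).eq_or_lt with h0 | hpos
  · rw [← h0, zero_mul, norm2_eq_zero.mp h0.symm, margin_zero]
  · have hunit : norm2 ((norm2 θ)⁻¹ • θ) = 1 := by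
      rw [norm2_smul, abs_of_pos (inv_pos.mpr hpos), inv_mul_cancel₀ hpos.ne']
    have := hmax _ hunit.le
    rwa [margin_smul (inv_pos.mpr hpos).le, inv_mul_le_iff₀ hpos] at this

theorem eq_of_margin_ge_of_norm2_eq_one [Nonempty (Fin n)] {M : ℝ} (hM : 0 < M)
    (hbound : ∀ θ, margin x y θ ≤ norm2 θ * M) {θ₁ θ₂ : Fin d → ℝ}
    (h₁ : norm2 θ₁ = 1) (h₂ : norm2 θ₂ = 1) (hm₁ : M ≤ margin x y θ₁)
    (hm₂ : M ≤ margin x y θ₂) : θ₁ = θ₂ := by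
  refine eq_of_norm2_eq_one_of_two_le_norm2_add h₁ h₂ (le_of_mul_le_mul_right ?_ hM)
  linarith [margin_add_le_margin_add (x := x) (y := y) θ₁ θ₂, hbound (θ₁ + θ₂)]

end Margin

section HeadCoordinate

variable {d n : ℕ} [Nonempty (Fin n)] {x : Fin n → Fin (d + 1) → ℝ} {y : Fin n → ℝ} {a : ℝ}

theorem margin_eq_head_add_margin_tail (hy : ∀ i, y i * y i = 1) (hx : ∀ i, x i 0 = y i * a)
    (θ : Fin (d + 1) → ℝ) :
    margin x y θ = θ 0 * a + margin (fun i => Fin.tail (x i)) y (Fin.tail θ) := by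
  have hterm : ∀ i, y i * dot θ (x i) = θ 0 * a + y i * dot (Fin.tail θ) (Fin.tail (x i)) := by
    intro i
    rw [dot_eq_head_add_dot_tail, hx, mul_add, mul_left_comm, ← mul_assoc (y i), hy, one_mul]
  simp only [margin, hterm]
  exact ((OrderIso.addLeft (θ 0 * a)).map_ciInf (Finite.bddBelow_range _)).symm

theorem margin_le_norm2_mul_of_head_eq {γ : ℝ} (hy : ∀ i, y i * y i = 1)
    (hx : ∀ i, x i 0 = y i * a)
    (hmax : ∀ τ, norm2 τ ≤ 1 → margin (fun i => Fin.tail (x i)) y τ ≤ γ)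
    (θ : Fin (d + 1) → ℝ) :
    margin x y θ ≤ norm2 θ * √(a ^ 2 + γ ^ 2) :=
  calc margin x y θ = θ 0 * a + margin (fun i => Fin.tail (x i)) y (Fin.tail θ) :=
        margin_eq_head_add_margin_tail hy hx θ
    _ ≤ θ 0 * a + norm2 (Fin.tail θ) * γ := by
        grw [margin_le_norm2_mul_of_forall_norm2_le_one hmax]
    _ ≤ √(θ 0 ^ 2 + norm2 (Fin.tail θ) ^ 2) * √(a ^ 2 + γ ^ 2) :=
        mul_add_mul_le_sqrt_mul_sqrt _ _ _ _
    _ = norm2 θ * √(a ^ 2 + γ ^ 2) := by rw [← norm2_cons, Fin.cons_self_tail]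

end HeadCoordinate

theorem max_margin_closed_form_general
    {m n : ℕ} (hn : 0 < n) (r : ℝ)
    (x : Fin n → Fin (m + 1) → ℝ) (y : Fin n → ℝ)
    (hy : ∀ i, y i = 1 ∨ y i = -1)
    (hx1 : ∀ i, x i 0 = y i * (r / 2))
    (θt : Fin m → ℝ) (γt : ℝ)
    (hθt_norm : norm2 θt = 1)
    (hγt : γt = margin (fun i => Fin.tail (x i)) y θt)
    (hγt_pos : 0 < γt)
    (hθt_max : ∀ θ : Fin m → ℝ, norm2 θ ≤ 1 →
      margin (fun i => Fin.tail (x i)) y θ ≤ γt) :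
    ∀ θhat : Fin (m + 1) → ℝ,
      θhat = (Real.sqrt (r ^ 2 + 4 * γt ^ 2))⁻¹ •
        (Fin.cons r ((2 * γt) • θt) : Fin (m + 1) → ℝ) →
      norm2 θhat = 1 ∧
      (∀ θ : Fin (m + 1) → ℝ, norm2 θ ≤ 1 → margin x y θ ≤ margin x y θhat) ∧
      (∀ θ : Fin (m + 1) → ℝ, norm2 θ = 1 →
        (∀ θ' : Fin (m + 1) → ℝ, norm2 θ' ≤ 1 → margin x y θ' ≤ margin x y θ) →
        θ = θhat) := by
  intro θhat hθhat
  have : Nonempty (Fin n) := Fin.pos_iff_nonempty.mp hn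
  have hy2 : ∀ i, y i * y i = 1 := fun i => by rcases hy i with h | h <;> norm_num [h]
  set s := √(r ^ 2 + 4 * γt ^ 2)
  have hs : 0 < s := Real.sqrt_pos.mpr (by positivity)
  have hs_sq : s ^ 2 = r ^ 2 + 4 * γt ^ 2 := Real.sq_sqrt (by positivity)
  have hbound : ∀ θ, margin x y θ ≤ norm2 θ * (s / 2) := by
    have hsqrt : √((r / 2) ^ 2 + γt ^ 2) = s / 2 := by
      rw [Real.sqrt_eq_iff_mul_self_eq_of_pos (half_pos hs)]
      linarith
    simpa only [hsqrt] using margin_le_norm2_mul_of_head_eq hy2 hx1 hθt_max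
  have hnorm : norm2 θhat = 1 := by
    rw [hθhat, norm2_smul, norm2_cons, norm2_smul, hθt_norm, abs_of_pos (inv_pos.mpr hs),
      mul_one, sq_abs, mul_pow]
    norm_num [s, hs.ne']
  have hmargin : margin x y θhat = s / 2 := by
    rw [hθhat, margin_smul (inv_pos.mpr hs).le, margin_eq_head_add_margin_tail hy2 hx1,
      Fin.cons_zero, Fin.tail_cons, margin_smul (by positivity), ← hγt]
    field_simp
    linarith
  refine ⟨hnorm, fun θ hθ => ?_, fun θ hθ hmax => ?_⟩
  · rw [hmargin]
    exact (hbound θ).trans (mul_le_of_le_one_left (half_pos hs).le hθ)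
  · exact eq_of_margin_ge_of_norm2_eq_one (half_pos hs) hbound hθ hnorm
      (hmargin ▸ hmax θhat hnorm.le) hmargin.ge

/-- Lemma 1, first part. For a dataset in `ℝ^{m+1} × {±1}` (so `d = m+1 ≥ 2`)
whose first covariate coordinate is `y_i · r/2`, and whose induced dataset (first coordinate
removed) is linearly separable with normalized max-`ℓ2`-margin solution `θ̃` and margin `γ̃ > 0`,
the normalized max-`ℓ2`-margin solution of the full dataset is
`θ̂ = (1/√(r² + 4γ̃²)) • (r, 2γ̃ θ̃)`: it has unit norm, it maximizes the minimum margin among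
all `θ` with `‖θ‖₂ ≤ 1`, and it is the unique unit-norm maximizer. -/
theorem max_margin_closed_form
    {m n : ℕ} (hm : 1 ≤ m) (hn : 0 < n) (r : ℝ) (hr : 0 < r)
    (x : Fin n → Fin (m + 1) → ℝ) (y : Fin n → ℝ)
    (hy : ∀ i, y i = 1 ∨ y i = -1)
    (hx1 : ∀ i, x i 0 = y i * (r / 2))
    (θt : Fin m → ℝ) (γt : ℝ)
    (hθt_norm : norm2 θt = 1)
    (hγt : γt = margin (fun i => Fin.tail (x i)) y θt)
    (hγt_pos : 0 < γt)
    (hθt_max : ∀ θ : Fin m → ℝ, norm2 θ ≤ 1 →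
      margin (fun i => Fin.tail (x i)) y θ ≤ γt) :
    ∀ θhat : Fin (m + 1) → ℝ,
      θhat = (Real.sqrt (r ^ 2 + 4 * γt ^ 2))⁻¹ •
        (Fin.cons r ((2 * γt) • θt) : Fin (m + 1) → ℝ) →
      norm2 θhat = 1 ∧
      (∀ θ : Fin (m + 1) → ℝ, norm2 θ ≤ 1 → margin x y θ ≤ margin x y θhat) ∧
      (∀ θ : Fin (m + 1) → ℝ, norm2 θ = 1 →
        (∀ θ' : Fin (m + 1) → ℝ, norm2 θ' ≤ 1 → margin x y θ' ≤ margin x y θ) →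
        θ = θhat) :=
  max_margin_closed_form_general hn r x y hy hx1 θt γt hθt_norm hγt hγt_pos hθt_max

end
end

section
/- Let d ≥ 2, r > 0, σ > 0 and 0 ≤ ε_te with 2ε_te < r. For any θ ∈ ℝ^d whose first coordinate satisfies θ₁ > 0, the ε_te-robust accuracy of the linear classifier θ on P_r with respect to the signal-directed perturbation sets S_{ε_te} equals its standard accuracy on P_{r − 2ε_te}: P_{(X,Y)∼P_r}[min_{x' ∈ S_{ε_te}(X)} Y·θᵀx' > 0] = P_{(X,Y)∼P_{r−2ε_te}}[Y·θᵀX > 0]. -/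
/-!
When `θ 0 > 0`, the worst perturbation in `S_ε` moves the signal coordinate by `-Yε`, so the
robust margin of `(X, Y)` is the ordinary margin of `(X - Yε e₁, Y)`, because `|Y| = 1`.
That shift sends `X = (Y r/2, X̃)` to `(Y (r - 2ε)/2, X̃)`, i.e. it pushes `P_r` forward to
`P_{r - 2ε}`.
-/

open MeasureTheory ProbabilityTheory Real Set
open scoped ENNReal BigOperators

noncomputable section

/-- The isotropic Gaussian measure `N(0, σ² I_m)` on `ℝ^m`. -/
def gaussPi (m : ℕ) (σ : ℝ) : Measure (Fin m → ℝ) :=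
  Measure.pi fun _ => gaussianReal 0 (Real.toNNReal (σ ^ 2))

/-- The data distribution `P_r` on `ℝ^{m+1} × {±1}`: the label `Y` is uniform on `{±1}`
and the covariate is `X = (Y · r/2, X̃)` with `X̃ ~ N(0, σ² I_m)`. -/
def Pdist (m : ℕ) (r σ : ℝ) : Measure ((Fin (m + 1) → ℝ) × ℝ) :=
  (2⁻¹ : ℝ≥0∞) • (gaussPi m σ).map (fun xt => ((Fin.cons (r / 2) xt : Fin (m + 1) → ℝ), (1 : ℝ)))
    + (2⁻¹ : ℝ≥0∞) • (gaussPi m σ).map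
        (fun xt => ((Fin.cons (-(r / 2)) xt : Fin (m + 1) → ℝ), (-1 : ℝ)))

lemma iInf_abs_le_add_mul {ε : ℝ} (hε : 0 ≤ ε) (a c : ℝ) :
    ⨅ β : {b : ℝ // |b| ≤ ε}, (c + β.1 * a) = c - ε * |a| := by
  have : Nonempty {b : ℝ // |b| ≤ ε} := ⟨⟨0, by simpa using hε⟩⟩
  have hlower (β : {b : ℝ // |b| ≤ ε}) : c - ε * |a| ≤ c + β.1 * a := by
    have := neg_abs_le (β.1 * a)
    have := mul_le_mul_of_nonneg_right β.2 (abs_nonneg a)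
    rw [abs_mul] at *
    linarith
  have hbdd : BddBelow (range fun β : {b : ℝ // |b| ≤ ε} => c + β.1 * a) :=
    ⟨_, forall_mem_range.2 hlower⟩
  have hε_mem : |ε| ≤ ε := (abs_of_nonneg hε).le
  refine le_antisymm ?_ (le_ciInf hlower)
  rcases le_or_gt 0 a with ha | ha
  · refine (ciInf_le hbdd ⟨-ε, (abs_neg ε).trans_le hε_mem⟩).trans_eq ?_
    rw [abs_of_nonneg ha]
    ring
  · refine (ciInf_le hbdd ⟨ε, hε_mem⟩).trans_eq ?_
    rw [abs_of_neg ha]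
    ring

lemma dot_add_smul_single {d : ℕ} (θ x : Fin d → ℝ) (i : Fin d) (β : ℝ) :
    dot θ (x + β • Pi.single i 1) = dot θ x + β * θ i := by
  simp [dot, mul_add, Finset.sum_add_distrib, Pi.single_apply, mul_comm]

lemma dot_sub_smul_single {d : ℕ} (θ x : Fin d → ℝ) (i : Fin d) (β : ℝ) :
    dot θ (x - β • Pi.single i 1) = dot θ x - β * θ i := by
  rw [sub_eq_add_neg, ← neg_smul, dot_add_smul_single, neg_mul, sub_eq_add_neg]

lemma Fin.cons_sub_smul_single {R : Type*} [Ring R] {n : ℕ} (c t : R) (x : Fin n → R) :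
    (Fin.cons c x : Fin (n + 1) → R) - t • Pi.single 0 1 = Fin.cons (c - t) x := by
  ext i
  refine Fin.cases ?_ (fun j => ?_) i <;> simp

lemma measurable_fin_cons_prodMk {m : ℕ} (c y : ℝ) :
    Measurable fun x : Fin m → ℝ => ((Fin.cons c x : Fin (m + 1) → ℝ), y) := by
  fun_prop

lemma iInf_mul_dot_add_smul_single {d : ℕ} {ε y : ℝ} (hε : 0 ≤ ε) (hy : |y| = 1)
    {θ : Fin d → ℝ} {i : Fin d} (hθ : 0 < θ i) (x : Fin d → ℝ) :
    ⨅ β : {b : ℝ // |b| ≤ ε}, y * dot θ (x + β.1 • Pi.single i 1)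
      = y * dot θ (x - (y * ε) • Pi.single i 1) := by
  have hyy : y * y = 1 := by rw [← abs_mul_abs_self, hy, one_mul]
  have hlin (β : {b : ℝ // |b| ≤ ε}) :
      y * dot θ (x + β.1 • Pi.single i 1) = y * dot θ x + β.1 * (y * θ i) := by
    rw [dot_add_smul_single]; ring
  rw [iInf_congr hlin, iInf_abs_le_add_mul hε, dot_sub_smul_single, abs_mul, hy, abs_of_pos hθ]
  linear_combination ε * θ i * hyy

def worstPerturbation {m : ℕ} (ε : ℝ) (p : (Fin (m + 1) → ℝ) × ℝ) : (Fin (m + 1) → ℝ) × ℝ :=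
  (p.1 - (p.2 * ε) • Pi.single 0 1, p.2)

lemma measurable_worstPerturbation {m : ℕ} (ε : ℝ) :
    Measurable (worstPerturbation (m := m) ε) := by
  unfold worstPerturbation; fun_prop

lemma Pdist_map_worstPerturbation (m : ℕ) (r σ ε : ℝ) :
    (Pdist m r σ).map (worstPerturbation ε) = Pdist m (r - 2 * ε) σ := by
  have hcons (c y : ℝ) :
      worstPerturbation ε ∘ (fun x : Fin m → ℝ => ((Fin.cons c x : Fin (m + 1) → ℝ), y))
        = fun x => ((Fin.cons (c - y * ε) x : Fin (m + 1) → ℝ), y) :=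
    funext fun x => congrArg (·, y) (Fin.cons_sub_smul_single c (y * ε) x)
  simp only [Pdist, Measure.map_add _ _ (measurable_worstPerturbation ε), Measure.map_smul,
    Measure.map_map (measurable_worstPerturbation ε) (measurable_fin_cons_prodMk _ _), hcons]
  ring_nf

lemma ae_abs_snd_Pdist_eq_one (m : ℕ) (r σ : ℝ) : ∀ᵐ p ∂Pdist m r σ, |p.2| = 1 := by
  have hlabel (c y : ℝ) (hy : |y| = 1) :
      ∀ᵐ p ∂(gaussPi m σ).map (fun x => ((Fin.cons c x : Fin (m + 1) → ℝ), y)), |p.2| = 1 :=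
    (ae_map_iff (measurable_fin_cons_prodMk c y).aemeasurable
      (measurableSet_eq_fun (by fun_prop) measurable_const)).2 (.of_forall fun _ => hy)
  exact ae_add_measure_iff.2 ⟨Measure.ae_smul_measure (hlabel _ _ abs_one) _,
    Measure.ae_smul_measure (hlabel _ _ (by simp)) _⟩

theorem robust_accuracy_eq_shifted_std_accuracy_general
    {m : ℕ} (r σ εte : ℝ)
    (hεte : 0 ≤ εte)
    (θ : Fin (m + 1) → ℝ) (hθ1 : 0 < θ 0) :
    (Pdist m r σ) {p | 0 < ⨅ β : {b : ℝ // |b| ≤ εte},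
        p.2 * dot θ (p.1 + β.1 • (Pi.single 0 1 : Fin (m + 1) → ℝ))}
      = (Pdist m (r - 2 * εte) σ) {p | 0 < p.2 * dot θ p.1} := by
  have hstd : MeasurableSet {p : (Fin (m + 1) → ℝ) × ℝ | 0 < p.2 * dot θ p.1} :=
    measurableSet_lt measurable_const (by unfold dot; fun_prop)
  have hrobust : {p : (Fin (m + 1) → ℝ) × ℝ | 0 < ⨅ β : {b : ℝ // |b| ≤ εte},
        p.2 * dot θ (p.1 + β.1 • (Pi.single 0 1 : Fin (m + 1) → ℝ))}
      =ᵐ[Pdist m r σ] worstPerturbation εte ⁻¹' {p | 0 < p.2 * dot θ p.1} := by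
    filter_upwards [ae_abs_snd_Pdist_eq_one m r σ] with p hp
    exact congrArg (0 < ·) (iInf_mul_dot_add_smul_single hεte hp hθ1 p.1)
  rw [measure_congr hrobust, ← Measure.map_apply (measurable_worstPerturbation εte) hstd,
    Pdist_map_worstPerturbation]

/-- For any linear classifier `θ` with positive first coordinate, its
`ε_te`-robust accuracy on `P_r` with respect to the signal-directed perturbation sets
`S_{ε_te}` equals its standard accuracy on `P_{r − 2ε_te}`. -/
theorem robust_accuracy_eq_shifted_std_accuracy
    {m : ℕ} (hm : 1 ≤ m) (r σ εte : ℝ) (hr : 0 < r) (hσ : 0 < σ)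
    (hεte : 0 ≤ εte) (h2εte : 2 * εte < r)
    (θ : Fin (m + 1) → ℝ) (hθ1 : 0 < θ 0) :
    (Pdist m r σ) {p | 0 < ⨅ β : {b : ℝ // |b| ≤ εte},
        p.2 * dot θ (p.1 + β.1 • (Pi.single 0 1 : Fin (m + 1) → ℝ))}
      = (Pdist m (r - 2 * εte) σ) {p | 0 < p.2 * dot θ p.1} :=
  robust_accuracy_eq_shifted_std_accuracy_general r σ εte hεte θ hθ1

end
end

section
/- For every fixed x > 0, the function f(φ) = (1/(√(2π)·φ))·exp(−x²/φ²) is monotonically increasing in φ on the interval (0, √2·x]. -/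
open Real Set

/-
Up to the factor `1/√(2π)`, the function is `φ⁻¹ e^{-x²/φ²}`, whose derivative is
`e^{-x²/φ²} (2x² - φ²) / φ⁴`; this is nonnegative exactly when `φ ≤ √2 |x|`.
-/

theorem hasDerivAt_inv_mul_exp_neg_div_sq (a : ℝ) {φ : ℝ} (hφ : φ ≠ 0) :
    HasDerivAt (fun φ : ℝ => φ⁻¹ * exp (-a / φ ^ 2))
      (exp (-a / φ ^ 2) * (2 * a - φ ^ 2) / φ ^ 4) φ := by
  have hinv : HasDerivAt (fun φ : ℝ => φ⁻¹) (-(φ ^ 2)⁻¹) φ := hasDerivAt_inv hφ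
  have hexponent : HasDerivAt (fun φ : ℝ => -a / φ ^ 2) (2 * a / φ ^ 3) φ :=
    ((hasDerivAt_const φ (-a)).fun_div (hasDerivAt_pow 2 φ) (pow_ne_zero 2 hφ)).congr_deriv <| by
      field_simp
      ring
  refine (hinv.mul hexponent.exp).congr_deriv ?_
  field_simp
  ring

theorem monotoneOn_inv_mul_exp_neg_div_sq (a : ℝ) :
    MonotoneOn (fun φ : ℝ => φ⁻¹ * exp (-a / φ ^ 2)) (Ioc 0 (√(2 * a))) := by
  have hderiv (φ : ℝ) (hφ : φ ∈ Ioc 0 (√(2 * a))) :=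
    hasDerivAt_inv_mul_exp_neg_div_sq a hφ.1.ne'
  refine monotoneOn_of_hasDerivWithinAt_nonneg (convex_Ioc _ _)
    (fun φ hφ => (hderiv φ hφ).continuousAt.continuousWithinAt)
    (fun φ hφ => (hderiv φ (interior_subset hφ)).hasDerivWithinAt) ?_
  rw [interior_Ioc]
  rintro φ ⟨hφ_pos, hφ_lt⟩
  have : 0 ≤ 2 * a - φ ^ 2 := by linarith [(lt_sqrt hφ_pos.le).1 hφ_lt]
  positivity

theorem density_monotone_on_general
    (x : ℝ) :
    MonotoneOn (fun φ : ℝ => 1 / (Real.sqrt (2 * Real.pi) * φ) * Real.exp (-x ^ 2 / φ ^ 2))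
      (Ioc 0 (Real.sqrt 2 * x)) := by
  have hinterval : Ioc 0 (√2 * x) ⊆ Ioc 0 (√(2 * x ^ 2)) := by
    rw [sqrt_mul zero_le_two, sqrt_sq_eq_abs]
    exact Ioc_subset_Ioc_right (mul_le_mul_of_nonneg_left (le_abs_self x) (sqrt_nonneg 2))
  intro φ hφ ψ hψ hφψ
  simp only [one_div, mul_inv, mul_assoc]
  exact mul_le_mul_of_nonneg_left
    (monotoneOn_inv_mul_exp_neg_div_sq (x ^ 2) (hinterval hφ) (hinterval hψ) hφψ)
    (by positivity)

/-- For every fixed `x > 0`, the function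
`φ ↦ (1/(√(2π) φ)) · exp(−x²/φ²)` is monotonically increasing on `(0, √2 · x]`. -/
theorem density_monotone_on
    (x : ℝ) (hx : 0 < x) :
    MonotoneOn (fun φ : ℝ => 1 / (Real.sqrt (2 * Real.pi) * φ) * Real.exp (-x ^ 2 / φ ^ 2))
      (Ioc 0 (Real.sqrt 2 * x)) :=
  density_monotone_on_general x
end
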